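/- For a chain of L qubits (L ≥ 2), consider the super-Hamiltonian P_{Z2} = 2 Σ_j (1 − Z_{j,t} Z_{j,b}) + 2 Σ_j (1 − X_{j,t} X_{j,b} X_{j+1,t} X_{j+1,b}) acting on the doubled space (C² ⊗ C²)^{⊗L} with periodic boundary conditions. All terms of P_{Z2} pairwise commute, P_{Z2} is positive semi-definite, and its kernel is exactly 2-dimensional, spanned by the vectorizations of the identity operator and of the product Z_1 Z_2 ⋯ Z_L. -/

import Mathlib

open Matrix
open scoped ComplexOrder

noncomputable section

namespace Z2Super

/-- Doubled (ladder) configurations: a spin configuration for the top leg and one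
for the bottom leg of the 2-leg ladder of length `L`. -/
abbrev Config (L : ℕ) := (Fin L → Fin 2) × (Fin L → Fin 2)

/-- Eigenvalue of the Pauli `Z` on a basis state: `+1` for `↑` and `−1` for `↓`. -/
def zval : Fin 2 → ℂ := fun b => if b = 0 then 1 else -1

/-- Flip the spin at site `j`. -/
def flip {L : ℕ} [NeZero L] (j : Fin L) (s : Fin L → Fin 2) : Fin L → Fin 2 :=
  Function.update s j (s j + 1)

/-- The rung term `2 (1 − Z_{j,t} Z_{j,b})` of the super-Hamiltonian (diagonal). -/
def rungTerm {L : ℕ} (j : Fin L) : Matrix (Config L) (Config L) ℂ :=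
  Matrix.of fun p q => if p = q then 2 * (1 - zval (p.1 j) * zval (p.2 j)) else 0

/-- The term `2 (1 − X_{j,t} X_{j,b} X_{j+1,t} X_{j+1,b})` (periodic boundary
conditions: `j+1` is taken cyclically). -/
def xTerm {L : ℕ} [NeZero L] (j : Fin L) : Matrix (Config L) (Config L) ℂ :=
  (2 : ℂ) • ((1 : Matrix (Config L) (Config L) ℂ)
    - Matrix.of fun p q =>
        if q = (flip j (flip (j + 1) p.1), flip j (flip (j + 1) p.2)) then 1 else 0)

/-- The family of all terms of the super-Hamiltonian `P_{Z2}`. -/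
def term (L : ℕ) [NeZero L] : Fin L ⊕ Fin L → Matrix (Config L) (Config L) ℂ :=
  Sum.elim rungTerm xTerm

/-- The `Z₂` super-Hamiltonian
`P_{Z2} = 2 Σ_j (1 − Z_{j,t}Z_{j,b}) + 2 Σ_j (1 − X_{j,t}X_{j,b}X_{j+1,t}X_{j+1,b})`. -/
def PZ2 (L : ℕ) [NeZero L] : Matrix (Config L) (Config L) ℂ :=
  (∑ j, rungTerm j) + ∑ j, xTerm j

/-- Vectorization of the identity operator. -/
def vId (L : ℕ) : Config L → ℂ := fun p => if p.1 = p.2 then 1 else 0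

/-- Vectorization of the product `Z_1 Z_2 ⋯ Z_L`. -/
def vZ (L : ℕ) : Config L → ℂ := fun p => if p.1 = p.2 then ∏ j, zval (p.1 j) else 0


end Z2Super

/-!
The rung terms are diagonal with entries `0` or `4`. The X-term at `j` is `2 (1 - P)`, where `P`
is the permutation matrix of the translation of the group `Config L` by `(b, b)`, with `b`
flipping the sites `j` and `j + 1`; since `b + b = 0`, it equals `(1 - P)ᴴ (1 - P)`. The diagonals
are invariant under these translations and translations commute, so all terms commute and are
positive semidefinite. Hence the kernel of their sum is the intersection of their kernels: the
vectors supported on the diagonal `s = t` and invariant under flipping two adjacent spins on both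
legs. Chaining bonds around the ring, such a vector is invariant under flipping any two spins, so
on the diagonal it only depends on the parity `∑ m, s m`; the two parity classes give `vId ± vZ`.
-/

namespace Matrix

variable {n R : Type*} [Fintype n]

theorem commute_permMatrix [DecidableEq n] [NonAssocSemiring R] {σ τ : Equiv.Perm n}
    (h : Commute σ τ) : Commute (σ.permMatrix R) (τ.permMatrix R) := by
  simp only [Commute, SemiconjBy, ← permMatrix_mul, h.eq]

theorem commute_diagonal_permMatrix [DecidableEq n] [NonAssocSemiring R] {d : n → R}
    {σ : Equiv.Perm n} (h : ∀ i, d (σ i) = d i) : Commute (diagonal d) (σ.permMatrix R) := by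
  ext i j
  simp only [diagonal_mul, mul_diagonal, Equiv.Perm.permMatrix, PEquiv.toMatrix_apply,
    Equiv.toPEquiv_apply, Option.mem_some_iff]
  split_ifs with hij
  · rw [← hij, h, mul_one, one_mul]
  · rw [mul_zero, zero_mul]

theorem conjTranspose_mul_self_one_sub_permMatrix [DecidableEq n] [Ring R] [StarRing R]
    {σ : Equiv.Perm n} (hσ : σ * σ = 1) :
    (1 - σ.permMatrix R)ᴴ * (1 - σ.permMatrix R) = (2 : R) • (1 - σ.permMatrix R) := by
  rw [conjTranspose_sub, conjTranspose_one, conjTranspose_permMatrix,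
    inv_eq_of_mul_eq_one_right hσ, sub_mul, mul_sub, mul_sub, ← permMatrix_mul, hσ,
    permMatrix_one, one_mul, one_mul, mul_one, two_smul]
  abel

theorem sum_mulVec_eq_zero_iff_of_posSemidef {𝕜 ι : Type*} [RCLike 𝕜] {s : Finset ι}
    {A : ι → Matrix n n 𝕜} (hA : ∀ i ∈ s, (A i).PosSemidef) (x : n → 𝕜) :
    (∑ i ∈ s, A i) *ᵥ x = 0 ↔ ∀ i ∈ s, A i *ᵥ x = 0 := by
  refine ⟨fun hx i hi => ?_, fun hx => by rw [sum_mulVec, Finset.sum_eq_zero hx]⟩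
  have hsum : ∑ i ∈ s, star x ⬝ᵥ A i *ᵥ x = 0 := by
    rw [← dotProduct_sum, ← sum_mulVec, hx, dotProduct_zero]
  rw [Finset.sum_eq_zero_iff_of_nonneg fun i hi => (hA i hi).dotProduct_mulVec_nonneg x] at hsum
  exact ((hA i hi).dotProduct_mulVec_zero_iff x).mp (hsum i hi)

end Matrix

namespace Z2Super

theorem pi_add_self {ι : Type*} (x : ι → Fin 2) : x + x = 0 :=
  funext fun m => (by decide : ∀ a : Fin 2, a + a = 0) (x m)

theorem zval_add (a b : Fin 2) : zval (a + b) = zval a * zval b := by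
  fin_cases a <;> fin_cases b <;> norm_num [zval, show (1 : Fin 2) + 1 = 0 from rfl]

theorem zval_mul_zval (a b : Fin 2) : zval a * zval b = if a = b then 1 else -1 := by
  fin_cases a <;> fin_cases b <;> norm_num [zval]

theorem zval_sum {ι : Type*} (s : Finset ι) (g : ι → Fin 2) :
    zval (∑ i ∈ s, g i) = ∏ i ∈ s, zval (g i) := by
  classical
  induction s using Finset.induction_on with
  | empty => simp [zval]
  | insert a s ha ih => rw [Finset.sum_insert ha, Finset.prod_insert ha, zval_add, ih]

theorem rungTerm_eq_diagonal {L : ℕ} (j : Fin L) :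
    rungTerm j = diagonal fun p => if p.1 j = p.2 j then 0 else 4 := by
  ext p q
  rw [rungTerm, of_apply, diagonal_apply, zval_mul_zval]
  split_ifs <;> norm_num

theorem rungTerm_mulVec_eq_zero_iff {L : ℕ} (j : Fin L) (v : Config L → ℂ) :
    rungTerm j *ᵥ v = 0 ↔ ∀ p : Config L, p.1 j ≠ p.2 j → v p = 0 := by
  simp only [rungTerm_eq_diagonal, funext_iff, mulVec_diagonal, Pi.zero_apply]
  refine forall_congr' fun p => ?_
  split_ifs with h <;> simp [h]

theorem vId_add_diag {L : ℕ} (p : Config L) (x : Fin L → Fin 2) :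
    vId L (p + (x, x)) = vId L p := by
  simp [vId]

variable {L : ℕ} [NeZero L]

theorem flip_eq_add_single (j : Fin L) (s : Fin L → Fin 2) : flip j s = s + Pi.single j 1 := by
  ext m
  rcases eq_or_ne m j with rfl | hm
  · simp [flip]
  · simp [flip, hm]

def bond (j : Fin L) : Fin L → Fin 2 := Pi.single j 1 + Pi.single (j + 1) 1

theorem flip_flip_succ (j : Fin L) (s : Fin L → Fin 2) :
    flip j (flip (j + 1) s) = s + bond j := by
  rw [flip_eq_add_single, flip_eq_add_single, bond, add_assoc, add_comm (Pi.single (j + 1) _)]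

theorem sum_bond (j : Fin L) : ∑ m, bond j m = 0 := by
  simp only [bond, Pi.add_apply, Finset.sum_add_distrib, Finset.sum_pi_single', Finset.mem_univ,
    if_true]
  decide

def bondShift (j : Fin L) : Equiv.Perm (Config L) := Equiv.addRight (bond j, bond j)

theorem bondShift_mul_self (j : Fin L) : bondShift j * bondShift j = 1 := by
  rw [bondShift, ← Equiv.addRight_add, Prod.mk_add_mk, pi_add_self, Prod.mk_zero_zero,
    Equiv.addRight_zero]

theorem commute_bondShift (j k : Fin L) : Commute (bondShift j) (bondShift k) := by
  simp only [Commute, SemiconjBy, bondShift, ← Equiv.addRight_add, add_comm]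

theorem xTerm_eq (j : Fin L) : xTerm j = (2 : ℂ) • (1 - (bondShift j).permMatrix ℂ) := by
  ext ⟨s, t⟩ q
  simp [xTerm, bondShift, PEquiv.toMatrix_apply, flip_flip_succ, eq_comm]

theorem term_commute (a b : Fin L ⊕ Fin L) : Commute (term L a) (term L b) := by
  have rung_comm_x (j k : Fin L) : Commute (rungTerm j) (xTerm k) := by
    rw [rungTerm_eq_diagonal, xTerm_eq]
    refine (((Commute.one_right _).sub_right (commute_diagonal_permMatrix ?_)).smul_right _)
    rintro ⟨s, t⟩
    simp [bondShift, Pi.add_apply, add_left_inj]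
  rcases a with j | j <;> rcases b with k | k
  · simp only [term, Sum.elim_inl, rungTerm_eq_diagonal]
    exact commute_diagonal _ _
  · exact rung_comm_x j k
  · exact (rung_comm_x k j).symm
  · simp only [term, Sum.elim_inr, xTerm_eq]
    exact (((Commute.one_left _).sub_left ((Commute.one_right _).sub_right
      (commute_permMatrix (commute_bondShift j k)))).smul_left _).smul_right _

theorem term_posSemidef (a : Fin L ⊕ Fin L) : (term L a).PosSemidef := by
  rcases a with j | j
  · rw [term, Sum.elim_inl, rungTerm_eq_diagonal, posSemidef_diagonal_iff]
    intro p
    split_ifs <;> norm_num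
  · rw [term, Sum.elim_inr, xTerm_eq,
      ← conjTranspose_mul_self_one_sub_permMatrix (bondShift_mul_self j)]
    exact posSemidef_conjTranspose_mul_self _

theorem PZ2_eq_sum_term : PZ2 L = ∑ a, term L a := by
  rw [PZ2, Fintype.sum_sum_type]
  rfl

theorem PZ2_posSemidef : (PZ2 L).PosSemidef := by
  rw [PZ2_eq_sum_term]
  exact posSemidef_sum _ fun a _ => term_posSemidef a

theorem xTerm_mulVec_eq_zero_iff (j : Fin L) (v : Config L → ℂ) :
    xTerm j *ᵥ v = 0 ↔ ∀ p, v (p + (bond j, bond j)) = v p := by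
  rw [xTerm_eq, smul_mulVec, sub_mulVec, one_mulVec, permMatrix_mulVec, smul_eq_zero,
    sub_eq_zero, funext_iff]
  simp [bondShift, eq_comm]

theorem PZ2_mulVec_eq_zero_iff (v : Config L → ℂ) :
    PZ2 L *ᵥ v = 0 ↔
      (∀ p : Config L, p.1 ≠ p.2 → v p = 0) ∧ ∀ j p, v (p + (bond j, bond j)) = v p := by
  rw [PZ2_eq_sum_term, sum_mulVec_eq_zero_iff_of_posSemidef fun a _ => term_posSemidef a]
  simp only [Finset.mem_univ, forall_const, Sum.forall, term, Sum.elim_inl, Sum.elim_inr,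
    rungTerm_mulVec_eq_zero_iff, xTerm_mulVec_eq_zero_iff, Function.ne_iff]
  constructor
  · rintro ⟨h, h'⟩
    exact ⟨fun p ⟨j, hj⟩ => h j p hj, h'⟩
  · rintro ⟨h, h'⟩
    exact ⟨fun j p hj => h p ⟨j, hj⟩, h'⟩

section Parity

variable {α : Type*} {f : (Fin L → Fin 2) → α} (hf : ∀ j u, f (u + bond j) = f u)
include hf

open Fin.NatCast in
theorem apply_add_single_zero_add_single_natCast (n : ℕ) (u : Fin L → Fin 2) :
    f (u + (Pi.single 0 1 + Pi.single (n : Fin L) 1)) = f u := by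
  induction n generalizing u with
  | zero => rw [Nat.cast_zero, pi_add_self, add_zero]
  | succ n ih =>
    have hchain : u + (Pi.single 0 1 + Pi.single ((n + 1 : ℕ) : Fin L) 1) =
        u + (Pi.single 0 1 + Pi.single (n : Fin L) 1) + bond (n : Fin L) := by
      rw [bond, Nat.cast_succ, add_assoc, add_assoc, ← add_assoc (Pi.single (n : Fin L) 1),
        pi_add_self, zero_add]
    rw [hchain, hf, ih]

theorem apply_add_single (a : Fin L) (c : Fin 2) (u : Fin L → Fin 2) :
    f (u + Pi.single a c) = f (u + Pi.single 0 c) := by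
  fin_cases c
  · simp
  · have h := apply_add_single_zero_add_single_natCast hf a.val (u + Pi.single 0 1)
    rwa [Fin.cast_val_eq_self, ← add_assoc, add_assoc u, pi_add_self, add_zero] at h

theorem apply_eq_apply_single_zero_sum (s : Fin L → Fin 2) :
    f s = f (Pi.single 0 (∑ m, s m)) := by
  have key (S : Finset (Fin L)) (u : Fin L → Fin 2) :
      f (u + ∑ m ∈ S, Pi.single m (s m)) = f (u + Pi.single 0 (∑ m ∈ S, s m)) := by
    induction S using Finset.induction_on generalizing u with
    | empty => simp
    | insert a S ha ih =>
      rw [Finset.sum_insert ha, Finset.sum_insert ha, ← add_assoc, ih, add_right_comm,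
        apply_add_single hf, add_assoc, ← Pi.single_add, add_comm (s a)]
  simpa [Finset.univ_sum_single] using key Finset.univ 0

end Parity

theorem vZ_add_bond (p : Config L) (j : Fin L) : vZ L (p + (bond j, bond j)) = vZ L p := by
  simp only [vZ, Prod.fst_add, Prod.snd_add, add_left_inj, Pi.add_apply, ← zval_sum,
    Finset.sum_add_distrib, sum_bond, add_zero]

theorem PZ2_mulVec_vId : PZ2 L *ᵥ vId L = 0 :=
  (PZ2_mulVec_eq_zero_iff _).mpr ⟨fun _ hp => if_neg hp, fun _ p => vId_add_diag p _⟩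

theorem PZ2_mulVec_vZ : PZ2 L *ᵥ vZ L = 0 :=
  (PZ2_mulVec_eq_zero_iff _).mpr ⟨fun _ hp => if_neg hp, fun j p => vZ_add_bond p j⟩

theorem mem_span_of_PZ2_mulVec_eq_zero {v : Config L → ℂ} (hv : PZ2 L *ᵥ v = 0) :
    v ∈ Submodule.span ℂ {vId L, vZ L} := by
  obtain ⟨hdiag, hbond⟩ := (PZ2_mulVec_eq_zero_iff v).mp hv
  have hparity (s : Fin L → Fin 2) :
      v (s, s) = v (Pi.single 0 (∑ m, s m), Pi.single 0 (∑ m, s m)) :=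
    apply_eq_apply_single_zero_sum (f := fun s => v (s, s)) (fun j u => hbond j (u, u)) s
  set e : Fin L → Fin 2 := Pi.single 0 1
  refine Submodule.mem_span_pair.mpr ⟨(v (0, 0) + v (e, e)) / 2, (v (0, 0) - v (e, e)) / 2, ?_⟩
  funext ⟨s, t⟩
  by_cases hst : s = t
  · subst hst
    simp only [hparity s, Pi.add_apply, Pi.smul_apply, smul_eq_mul, vId, vZ, ← zval_sum]
    generalize ∑ m, s m = c
    fin_cases c <;> simp [zval, e] <;> ring
  · simp [vId, vZ, hst, hdiag (s, t) hst]

theorem linearIndependent_vId_vZ : LinearIndependent ℂ ![vId L, vZ L] := by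
  rw [LinearIndependent.pair_iff]
  intro a b hab
  have h0 := congrFun hab (0, 0)
  have he := congrFun hab (Pi.single 0 1, Pi.single 0 1)
  simp only [Pi.add_apply, Pi.smul_apply, Pi.zero_apply, smul_eq_mul, vId, vZ, if_true,
    ← zval_sum, Finset.sum_pi_single', Finset.mem_univ, Finset.sum_const_zero] at h0 he
  norm_num [zval] at h0 he
  exact ⟨by linear_combination (h0 + he) / 2, by linear_combination (h0 - he) / 2⟩

theorem z2_super_hamiltonian_general (L : ℕ) [NeZero L] :
    (∀ a b, Commute (term L a) (term L b)) ∧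
    (PZ2 L).PosSemidef ∧
    (∀ v : Config L → ℂ,
        (PZ2 L).mulVec v = 0 ↔ v ∈ Submodule.span ℂ {vId L, vZ L}) ∧
    LinearIndependent ℂ ![vId L, vZ L] := by
  refine ⟨term_commute, PZ2_posSemidef,
    fun v => ⟨mem_span_of_PZ2_mulVec_eq_zero, fun hv => ?_⟩, linearIndependent_vId_vZ⟩
  obtain ⟨a, b, rfl⟩ := Submodule.mem_span_pair.mp hv
  rw [mulVec_add, mulVec_smul, mulVec_smul, PZ2_mulVec_vId, PZ2_mulVec_vZ, smul_zero, smul_zero,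
    add_zero]

/-- All terms of `P_{Z2}` pairwise commute, `P_{Z2}` is positive semi-definite, and its
kernel is exactly 2-dimensional, spanned by the vectorizations of the identity and of
`Z_1 ⋯ Z_L`. -/
theorem z2_super_hamiltonian (L : ℕ) [NeZero L] (hL : 2 ≤ L) :
    (∀ a b, Commute (term L a) (term L b)) ∧
    (PZ2 L).PosSemidef ∧
    (∀ v : Config L → ℂ,
        (PZ2 L).mulVec v = 0 ↔ v ∈ Submodule.span ℂ {vId L, vZ L}) ∧
    LinearIndependent ℂ ![vId L, vZ L] :=
  z2_super_hamiltonian_general L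

end Z2Super
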